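/- Suppose the Orlicz super Poincaré inequality holds: for all r > r₀, ∫ f² dμ ≤ r ∫|∇f|² dμ + β(r) ||f||_Φ², where Φ is a finite Young function whose dual Φ* satisfies Φ*(x)/x² → ∞ and x ↦ Φ*(√x) is a Young function. Then the classical super Poincaré inequality ∫ f² dμ ≤ r ∫|∇f|² dμ + β̃(r)(∫|f| dμ)² holds for all r > 8r₀ with some function β̃. -/

import Mathlib

open MeasureTheory Real Filter Set

/-- A Young function: even, convex, vanishing at `0`, tending to `∞`. -/
def IsYoung (Φ : ℝ → ℝ) : Prop :=
  (∀ x, Φ (-x) = Φ x) ∧ ConvexOn ℝ Set.univ Φ ∧ Φ 0 = 0 ∧ Tendsto Φ atTop atTop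

/-- The Luxembourg norm `‖f‖_Φ = inf{λ > 0 : ∫ Φ(|f|/λ) dμ ≤ 1}`. -/
noncomputable def luxNorm {Ω : Type*} [MeasurableSpace Ω] (μ : Measure Ω)
    (Φ : ℝ → ℝ) (f : Ω → ℝ) : ℝ :=
  sInf { l | 0 < l ∧ ∫⁻ x, ENNReal.ofReal (Φ (|f x| / l)) ∂μ ≤ 1 }

lemma exists_subgradient (Φ : ℝ → ℝ) (hc : ConvexOn ℝ Set.univ Φ) (y₀ : ℝ) :
    ∃ x : ℝ, ∀ y, x * y - Φ y ≤ x * y₀ - Φ y₀ := by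
  set S : Set ℝ := {s | ∃ y, y₀ < y ∧ s = (Φ y - Φ y₀) / (y - y₀)} with hS
  have hne : S.Nonempty := ⟨(Φ (y₀ + 1) - Φ y₀) / ((y₀ + 1) - y₀), y₀ + 1, by linarith, rfl⟩
  have hbdd : BddBelow S := by
    refine ⟨(Φ (y₀ - 1) - Φ y₀) / ((y₀ - 1) - y₀), ?_⟩
    rintro s ⟨y, hy, rfl⟩
    exact hc.secant_mono (mem_univ y₀) (mem_univ (y₀ - 1)) (mem_univ y)
      (by linarith) (by linarith) (by linarith)
  refine ⟨sInf S, fun y => ?_⟩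
  rcases lt_trichotomy y y₀ with h | h | h
  · have hle : (Φ y - Φ y₀) / (y - y₀) ≤ sInf S := by
      apply le_csInf hne
      rintro s ⟨y', hy', rfl⟩
      exact hc.secant_mono (mem_univ y₀) (mem_univ y) (mem_univ y')
        (by linarith) (by linarith) (by linarith)
    have hyn : y - y₀ < 0 := by linarith
    rw [div_le_iff_of_neg hyn] at hle
    nlinarith [hle]
  · simp [h]
  · have hle : sInf S ≤ (Φ y - Φ y₀) / (y - y₀) := csInf_le hbdd ⟨y, h, rfl⟩
    have hyn : (0:ℝ) < y - y₀ := by linarith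
    rw [le_div_iff₀ hyn] at hle
    nlinarith [hle]

lemma young_nonneg (Φ : ℝ → ℝ) (hΦ : IsYoung Φ) : ∀ x, 0 ≤ Φ x := by
  intro x
  have h := hΦ.2.1.2 (mem_univ x) (mem_univ (-x))
    (by norm_num : (0:ℝ) ≤ 1/2) (by norm_num : (0:ℝ) ≤ 1/2) (by norm_num)
  simp only [smul_eq_mul] at h
  have : (1/2 : ℝ) * x + (1/2) * (-x) = 0 := by ring
  rw [this, hΦ.2.2.1, hΦ.1 x] at h
  linarith

/-- From super-quadratic growth of the dual `Φs`, the function `Φ` is dominated by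
`y²/(2c) + R|y|`. -/

lemma quad_lin_bound (Φ Φs : ℝ → ℝ) (hΦ : IsYoung Φ) (hΦs : IsYoung Φs)
    (hdual : ∀ x, Φs x = ⨆ y : ℝ, (x * y - Φ y))
    (hgrow : Tendsto (fun x => Φs x / x ^ 2) atTop atTop) :
    ∀ c > (0:ℝ), ∃ R ≥ (1:ℝ), ∀ y, Φ y ≤ y ^ 2 / (2 * c) + R * |y| := by
  intro c hc
  obtain ⟨R₀, hR₀⟩ := (hgrow.eventually_ge_atTop c).exists_forall_of_atTop
  set R := max R₀ 1 with hR
  have hR1 : (1:ℝ) ≤ R := le_max_right _ _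
  have hRpos : (0:ℝ) < R := by linarith
  -- tail bound on Φs
  have tail : ∀ x, c * x ^ 2 - c * R ^ 2 ≤ Φs x := by
    intro x
    rcases le_or_gt |x| R with h | h
    · have h1 : x ^ 2 ≤ R ^ 2 := by nlinarith [abs_nonneg x, sq_abs x]
      have := young_nonneg Φs hΦs x
      nlinarith
    · have hx : R₀ ≤ |x| := le_trans (le_max_left _ _) h.le
      have h1 : c ≤ Φs |x| / |x| ^ 2 := hR₀ |x| hx
      have h2 : Φs |x| = Φs x := by
        rcases abs_choice x with h' | h'
        · rw [h']
        · rw [h', hΦs.1]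
      have hxpos : (0:ℝ) < |x| := lt_of_lt_of_le hRpos h.le
      have h3 : c * |x| ^ 2 ≤ Φs |x| := by
        rw [le_div_iff₀ (by positivity)] at h1
        linarith [h1]
      rw [h2] at h3
      nlinarith [sq_abs x, sq_nonneg R]
  -- pointwise bound Φ y ≤ y²/(4c) + cR²
  have Φbd : ∀ y, Φ y ≤ y ^ 2 / (4 * c) + c * R ^ 2 := by
    intro y
    obtain ⟨x, hx⟩ := exists_subgradient Φ hΦ.2.1 y
    have hbdd : BddAbove (Set.range fun y' => x * y' - Φ y') := ⟨x * y - Φ y, by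
      rintro s ⟨y', rfl⟩; exact hx y'⟩
    have h1 : Φs x = x * y - Φ y := by
      rw [hdual x]
      apply le_antisymm
      · exact ciSup_le hx
      · exact le_ciSup hbdd y
    have h2 : Φ y = x * y - Φs x := by rw [h1]; ring
    have h3 := tail x
    have key : x * y - c * x ^ 2 ≤ y ^ 2 / (4 * c) := by
      rw [le_div_iff₀ (by positivity)]
      nlinarith [sq_nonneg (y - 2 * c * x)]
    rw [h2]; nlinarith
  -- refine to quadratic + linear
  refine ⟨R, hR1, fun y => ?_⟩
  have hy : Φ y = Φ |y| := by
    rcases abs_choice y with h' | h'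
    · rw [h']
    · rw [h', hΦ.1]
  set T : ℝ := 2 * c * R with hT
  have hTpos : (0:ℝ) < T := by positivity
  rcases le_or_gt T |y| with h | h
  · -- large y: quadratic dominates
    have h1 := Φbd y
    have h2 : c * R ^ 2 ≤ y ^ 2 / (4 * c) := by
      rw [le_div_iff₀ (by positivity)]
      nlinarith [sq_abs y, abs_nonneg y]
    have : y ^ 2 / (4 * c) + y ^ 2 / (4 * c) = y ^ 2 / (2 * c) := by ring
    nlinarith [mul_nonneg hRpos.le (abs_nonneg y)]
  · -- small y: linear bound by convexity
    set t : ℝ := |y| / T with ht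
    have ht0 : 0 ≤ t := by positivity
    have ht1 : t ≤ 1 := by rw [ht, div_le_one hTpos]; exact h.le
    have hconv := hΦ.2.1.2 (mem_univ T) (mem_univ 0)
      ht0 (sub_nonneg.mpr ht1) (by ring : t + (1 - t) = 1)
    simp only [smul_eq_mul, mul_zero, add_zero] at hconv
    have harg : t * T = |y| := div_mul_cancel₀ _ hTpos.ne'
    rw [harg, hΦ.2.2.1, mul_zero, add_zero] at hconv
    have hΦT : Φ T ≤ T ^ 2 / (4 * c) + c * R ^ 2 := Φbd T
    have hT2 : T ^ 2 / (4 * c) = c * R ^ 2 := by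
      rw [hT]; field_simp; ring
    have hΦT2 : Φ T ≤ 2 * c * R ^ 2 := by rw [hT2] at hΦT; linarith
    have h5 : Φ |y| ≤ t * (2 * c * R ^ 2) :=
      le_trans hconv (mul_le_mul_of_nonneg_left hΦT2 ht0)
    have hteq : t * (2 * c * R ^ 2) = R * |y| := by
      have h2cr : 2 * c * R ^ 2 = T * R := by rw [hT]; ring
      rw [h2cr, ← mul_assoc, harg, mul_comm]
    have h6 : (0:ℝ) ≤ y ^ 2 / (2 * c) := by positivity
    rw [hy]
    linarith [h5, hteq.le, h6]

lemma lux_sq_bound {Ω : Type*} [MeasurableSpace Ω] (μ : Measure Ω)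
    [IsProbabilityMeasure μ] (Φ Φs : ℝ → ℝ) (hΦ : IsYoung Φ) (hΦs : IsYoung Φs)
    (hdual : ∀ x, Φs x = ⨆ y : ℝ, (x * y - Φ y))
    (hgrow : Tendsto (fun x => Φs x / x ^ 2) atTop atTop) :
    ∀ ε > (0:ℝ), ∃ C ≥ (0:ℝ), ∀ f : Ω → ℝ, Integrable f μ →
      Integrable (fun x => (f x) ^ 2) μ →
      luxNorm μ Φ f ^ 2 ≤ ε * ∫ x, (f x) ^ 2 ∂μ + C * (∫ x, |f x| ∂μ) ^ 2 := by
  intro ε hε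
  obtain ⟨R, hR1, hΦbd⟩ := quad_lin_bound Φ Φs hΦ hΦs hdual hgrow ε⁻¹ (by positivity)
  have hRpos : (0:ℝ) < R := by linarith
  refine ⟨4 * R ^ 2, by positivity, fun f hfi hf2i => ?_⟩
  set P := ∫ x, (f x) ^ 2 ∂μ with hPdef
  set I := ∫ x, |f x| ∂μ with hIdef
  have hP : 0 ≤ P := integral_nonneg fun x => sq_nonneg _
  have hI : 0 ≤ I := integral_nonneg fun x => abs_nonneg _
  have key : ∀ η > (0:ℝ), luxNorm μ Φ f ^ 2 ≤ (ε * P + 4 * R ^ 2 * I ^ 2) + η := by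
    intro η hη
    set z := ε * P + 4 * R ^ 2 * I ^ 2 + η with hzdef
    have hz : 0 < z := by positivity
    set l := Real.sqrt z with hldef
    have hl : 0 < l := Real.sqrt_pos.mpr hz
    have hl2 : l ^ 2 = z := Real.sq_sqrt hz.le
    set g : Ω → ℝ := fun x => (f x) ^ 2 * (ε / (2 * l ^ 2)) + |f x| * (R / l) with hgdef
    have hgnn : ∀ x, 0 ≤ g x := fun x => by positivity
    have hgint : Integrable g μ :=
      (hf2i.mul_const _).add ((hfi.abs).mul_const _)
    have ptwise : ∀ x, Φ (|f x| / l) ≤ g x := by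
      intro x
      have h1 := hΦbd (|f x| / l)
      have h2 : |f x| / l ≥ 0 := by positivity
      have h3 : |(|f x| / l)| = |f x| / l := abs_of_nonneg h2
      have h4 : (|f x| / l) ^ 2 / (2 * ε⁻¹) = (f x) ^ 2 * (ε / (2 * l ^ 2)) := by
        rw [div_pow, sq_abs]
        field_simp [hε.ne', hl.ne']
      have h5 : R * (|f x| / l) = |f x| * (R / l) := by ring
      rw [h3, h4, h5] at h1
      exact h1
    have hint_g : ∫ x, g x ∂μ = P * (ε / (2 * l ^ 2)) + I * (R / l) := by
      rw [hgdef]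
      rw [integral_add (hf2i.mul_const _) ((hfi.abs).mul_const _),
        integral_mul_const, integral_mul_const]
    have hεP : ε * P ≤ l ^ 2 := by rw [hl2]; nlinarith
    have b1 : P * (ε / (2 * l ^ 2)) ≤ 1 / 2 := by
      have e1 : P * (ε / (2 * l ^ 2)) = (ε * P) / (2 * l ^ 2) := by ring
      rw [e1, div_le_iff₀ (by positivity)]
      nlinarith
    have hRIl : 2 * R * I ≤ l := by
      rw [hldef]
      calc 2 * R * I = Real.sqrt ((2 * R * I) ^ 2) := (Real.sqrt_sq (by positivity)).symm
        _ ≤ Real.sqrt z := Real.sqrt_le_sqrt (by nlinarith)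
    have b2 : I * (R / l) ≤ 1 / 2 := by
      have e2 : I * (R / l) = (R * I) / l := by ring
      rw [e2, div_le_iff₀ hl]
      nlinarith
    have hmem : l ∈ { l | 0 < l ∧ ∫⁻ x, ENNReal.ofReal (Φ (|f x| / l)) ∂μ ≤ 1 } := by
      refine ⟨hl, ?_⟩
      calc ∫⁻ x, ENNReal.ofReal (Φ (|f x| / l)) ∂μ
          ≤ ∫⁻ x, ENNReal.ofReal (g x) ∂μ :=
            lintegral_mono fun x => ENNReal.ofReal_le_ofReal (ptwise x)
        _ = ENNReal.ofReal (∫ x, g x ∂μ) :=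
            (ofReal_integral_eq_lintegral_ofReal hgint (ae_of_all _ hgnn)).symm
        _ ≤ ENNReal.ofReal 1 := ENNReal.ofReal_le_ofReal (by rw [hint_g]; linarith)
        _ = 1 := ENNReal.ofReal_one
    have hlux_le : luxNorm μ Φ f ≤ l :=
      csInf_le ⟨0, fun b hb => hb.1.le⟩ hmem
    have hlux_nn : 0 ≤ luxNorm μ Φ f :=
      Real.sInf_nonneg fun b hb => hb.1.le
    calc luxNorm μ Φ f ^ 2 ≤ l ^ 2 := pow_le_pow_left₀ hlux_nn hlux_le 2
      _ = z := hl2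
      _ = (ε * P + 4 * R ^ 2 * I ^ 2) + η := hzdef
  exact le_of_forall_pos_le_add key

/-- an Orlicz super Poincaré inequality (valid for `r > r₀`), for a finite
Young function `Φ` whose dual `Φ*` satisfies `Φ*(x)/x² → ∞` and `x ↦ Φ*(√x)` is a Young
function, implies the classical super Poincaré inequality for all `r > 8r₀` with some
function `β̃`. -/
theorem orlicz_spi_implies_spi
    {n : ℕ} (V : EuclideanSpace ℝ (Fin n) → ℝ) (hV : ContDiff ℝ (⊤ : ℕ∞) V)
    (μ : Measure (EuclideanSpace ℝ (Fin n)))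
    (hμ : μ = volume.withDensity fun x => ENNReal.ofReal (exp (-V x)))
    [IsProbabilityMeasure μ]
    (Φ Φs : ℝ → ℝ) (hΦ : IsYoung Φ) (hΦs : IsYoung Φs)
    (hdual : ∀ x, Φs x = ⨆ y : ℝ, (x * y - Φ y))
    (hgrow : Tendsto (fun x => Φs x / x ^ 2) atTop atTop)
    (hcomp : IsYoung (fun x => Φs (Real.sqrt |x|)))
    (r₀ : ℝ) (β : ℝ → ℝ)
    (hOSPI : ∀ r > r₀, ∀ f : EuclideanSpace ℝ (Fin n) → ℝ,
      ContDiff ℝ (⊤ : ℕ∞) f → HasCompactSupport f →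
      ∫ x, (f x) ^ 2 ∂μ ≤ r * ∫ x, ‖fderiv ℝ f x‖ ^ 2 ∂μ
        + β r * (luxNorm μ Φ f) ^ 2) :
    ∃ βt : ℝ → ℝ, ∀ r > 8 * r₀, ∀ f : EuclideanSpace ℝ (Fin n) → ℝ,
      ContDiff ℝ (⊤ : ℕ∞) f → HasCompactSupport f →
      ∫ x, (f x) ^ 2 ∂μ ≤ r * ∫ x, ‖fderiv ℝ f x‖ ^ 2 ∂μ
        + βt r * (∫ x, |f x| ∂μ) ^ 2 := by
  have key : ∀ r, 8 * r₀ < r → ∃ K : ℝ, ∀ f : EuclideanSpace ℝ (Fin n) → ℝ,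
      ContDiff ℝ (⊤ : ℕ∞) f → HasCompactSupport f →
      ∫ x, (f x) ^ 2 ∂μ ≤ r * ∫ x, ‖fderiv ℝ f x‖ ^ 2 ∂μ
        + K * (∫ x, |f x| ∂μ) ^ 2 := by
    intro r hr
    rcases lt_or_ge r₀ (r / 2) with hcase | hcase
    · -- r/2 > r₀ : apply the Orlicz SPI at r/2
      set B : ℝ := max (β (r / 2)) 0 with hBdef
      have hB : 0 ≤ B := le_max_right _ _
      have hβB : β (r / 2) ≤ B := le_max_left _ _
      obtain ⟨C, hC, hCf⟩ := lux_sq_bound μ Φ Φs hΦ hΦs hdual hgrow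
        (1 / (2 * (B + 1))) (by positivity)
      have hBε : B * (1 / (2 * (B + 1))) ≤ 1 / 2 := by
        rw [mul_one_div, div_le_div_iff₀ (by positivity) (by norm_num)]
        linarith
      refine ⟨2 * B * C, fun f hf hs => ?_⟩
      have intf : Integrable f μ := hf.continuous.integrable_of_hasCompactSupport hs
      have intf2 : Integrable (fun x => (f x) ^ 2) μ := by
        have h := hs.comp_left (g := fun t : ℝ => t ^ 2) (by simp)
        exact (hf.continuous.pow 2).integrable_of_hasCompactSupport h
      set P := ∫ x, (f x) ^ 2 ∂μ with hPdef
      set D := ∫ x, ‖fderiv ℝ f x‖ ^ 2 ∂μ with hDdef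
      set I := ∫ x, |f x| ∂μ with hIdef
      have hP : 0 ≤ P := integral_nonneg fun x => sq_nonneg _
      have hD : 0 ≤ D := integral_nonneg fun x => sq_nonneg _
      have h1 := hOSPI (r / 2) hcase f hf hs
      have h2 := hCf f intf intf2
      have hL2 : (0:ℝ) ≤ luxNorm μ Φ f ^ 2 := sq_nonneg _
      have h3 : β (r / 2) * luxNorm μ Φ f ^ 2
          ≤ B * (1 / (2 * (B + 1))) * P + B * C * I ^ 2 := by
        calc β (r / 2) * luxNorm μ Φ f ^ 2 ≤ B * luxNorm μ Φ f ^ 2 :=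
              mul_le_mul_of_nonneg_right hβB hL2
          _ ≤ B * (1 / (2 * (B + 1)) * P + C * I ^ 2) :=
              mul_le_mul_of_nonneg_left h2 hB
          _ = B * (1 / (2 * (B + 1))) * P + B * C * I ^ 2 := by ring
      have h4 : B * (1 / (2 * (B + 1))) * P ≤ 1 / 2 * P :=
        mul_le_mul_of_nonneg_right hBε hP
      linarith
    · -- r/2 ≤ r₀ : then r₀ < 0 and r < 0; apply the Orlicz SPI at r₀/2
      have hr0neg : r₀ < 0 := by linarith
      set B : ℝ := max (β (r₀ / 2)) 0 with hBdef
      have hB : 0 ≤ B := le_max_right _ _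
      have hβB : β (r₀ / 2) ≤ B := le_max_left _ _
      obtain ⟨C, hC, hCf⟩ := lux_sq_bound μ Φ Φs hΦ hΦs hdual hgrow
        (1 / (16 * (B + 1))) (by positivity)
      have hBε : B * (1 / (16 * (B + 1))) ≤ 1 / 16 := by
        rw [mul_one_div, div_le_div_iff₀ (by positivity) (by norm_num)]
        linarith
      refine ⟨16 * B * C, fun f hf hs => ?_⟩
      have intf : Integrable f μ := hf.continuous.integrable_of_hasCompactSupport hs
      have intf2 : Integrable (fun x => (f x) ^ 2) μ := by
        have h := hs.comp_left (g := fun t : ℝ => t ^ 2) (by simp)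
        exact (hf.continuous.pow 2).integrable_of_hasCompactSupport h
      set P := ∫ x, (f x) ^ 2 ∂μ with hPdef
      set D := ∫ x, ‖fderiv ℝ f x‖ ^ 2 ∂μ with hDdef
      set I := ∫ x, |f x| ∂μ with hIdef
      have hP : 0 ≤ P := integral_nonneg fun x => sq_nonneg _
      have hD : 0 ≤ D := integral_nonneg fun x => sq_nonneg _
      have h1 := hOSPI (r₀ / 2) (by linarith) f hf hs
      have h2 := hCf f intf intf2
      have hL2 : (0:ℝ) ≤ luxNorm μ Φ f ^ 2 := sq_nonneg _
      have h3 : β (r₀ / 2) * luxNorm μ Φ f ^ 2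
          ≤ B * (1 / (16 * (B + 1))) * P + B * C * I ^ 2 := by
        calc β (r₀ / 2) * luxNorm μ Φ f ^ 2 ≤ B * luxNorm μ Φ f ^ 2 :=
              mul_le_mul_of_nonneg_right hβB hL2
          _ ≤ B * (1 / (16 * (B + 1)) * P + C * I ^ 2) :=
              mul_le_mul_of_nonneg_left h2 hB
          _ = B * (1 / (16 * (B + 1))) * P + B * C * I ^ 2 := by ring
      have h4 : B * (1 / (16 * (B + 1))) * P ≤ 1 / 16 * P :=
        mul_le_mul_of_nonneg_right hBε hP
      -- P ≤ (r₀/2) D + P/16 + B C I², hence 15 P ≤ 8 r₀ D + 16 B C I²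
      have h5 : 8 * r₀ * D ≤ r * D := mul_le_mul_of_nonneg_right hr.le hD
      linarith
  classical
  refine ⟨fun r => if h : 8 * r₀ < r then (key r h).choose else 0, fun r hr f hf hs => ?_⟩
  have h := (key r hr).choose_spec f hf hs
  simpa [dif_pos hr] using h
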